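/- arXiv:1701.03435 — 3 statements merged into one kernel-verified Lean document; each statement's English description precedes it below -/
import Mathlib

section
/- Let σ be a type and let f, g be nonzero multivariate polynomials in MvPolynomial σ ℚ[t]. Then f·g is nonzero, ω₀(f·g) = ω₀(f) + ω₀(g), and the initial form of the product is the product of the initial forms: in(f·g) = in(f)·in(g) in MvPolynomial σ ℚ. -/
/-! Exchanging the roles of `t` and the variables turns `f` into a polynomial in `t` with
coefficients in `MvPolynomial σ ℚ`; then `ω₀(f)` is its trailing degree and `in(f)` its
trailing coefficient. Both are multiplicative over the domain `MvPolynomial σ ℚ`. -/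

open Polynomial

/-- The t-adic valuation of the ℚ[t]-coefficient of minimal valuation of a
multivariate polynomial over ℚ[t]. -/
noncomputable def omega0 {σ : Type*} (f : MvPolynomial σ ℚ[X]) : ℕ :=
  sInf ((fun m => (f.coeff m).rootMultiplicity 0) '' ↑f.support)

/-- The initial form of `f`: the coefficient at each monomial is the coefficient of
`t ^ ω₀(f)` in the corresponding ℚ[t]-coefficient of `f`. -/
noncomputable def initForm {σ : Type*} (f : MvPolynomial σ ℚ[X]) : MvPolynomial σ ℚ :=
  ∑ m ∈ f.support, MvPolynomial.monomial m ((f.coeff m).coeff (omega0 f))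

namespace MvPolynomial

variable {σ R : Type*} [CommSemiring R]

noncomputable def commPolynomial : MvPolynomial σ R[X] →+* (MvPolynomial σ R)[X] :=
  eval₂Hom (mapRingHom C) fun i => Polynomial.C (X i)

theorem coeff_coeff_commPolynomial (f : MvPolynomial σ R[X]) (n : ℕ) (m : σ →₀ ℕ) :
    ((commPolynomial f).coeff n).coeff m = (f.coeff m).coeff n := by
  classical
  induction f using MvPolynomial.induction_on generalizing m with
  | C a =>
    simp only [commPolynomial, eval₂Hom_C, coe_mapRingHom, Polynomial.coeff_map, coeff_C]
    split <;> simp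
  | add p q hp hq => simp [hp, hq]
  | mul_X p i hp =>
    simp only [commPolynomial, map_mul, eval₂Hom_X', Polynomial.coeff_mul_C] at hp ⊢
    rw [coeff_mul_X', coeff_mul_X']
    split
    · exact hp _
    · simp

theorem commPolynomial_injective : Function.Injective (commPolynomial (σ := σ) (R := R)) := by
  intro f g h
  ext m n
  rw [← coeff_coeff_commPolynomial, h, coeff_coeff_commPolynomial]

theorem commPolynomial_ne_zero {f : MvPolynomial σ R[X]} (hf : f ≠ 0) : commPolynomial f ≠ 0 :=
  (map_ne_zero_iff _ commPolynomial_injective).mpr hf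

theorem natTrailingDegree_commPolynomial_le {f : MvPolynomial σ R[X]} {m : σ →₀ ℕ}
    (hm : f.coeff m ≠ 0) :
    (commPolynomial f).natTrailingDegree ≤ (f.coeff m).natTrailingDegree := by
  apply natTrailingDegree_le_of_ne_zero
  rw [MvPolynomial.ne_zero_iff]
  exact ⟨m, by rw [coeff_coeff_commPolynomial]; exact trailingCoeff_nonzero_iff_nonzero.mpr hm⟩

theorem exists_natTrailingDegree_coeff_eq {f : MvPolynomial σ R[X]} (hf : f ≠ 0) :
    ∃ m, f.coeff m ≠ 0 ∧
      (f.coeff m).natTrailingDegree = (commPolynomial f).natTrailingDegree := by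
  obtain ⟨m, hm⟩ := MvPolynomial.ne_zero_iff.mp
    (trailingCoeff_nonzero_iff_nonzero.mpr (commPolynomial_ne_zero hf))
  rw [trailingCoeff, coeff_coeff_commPolynomial] at hm
  have hfm : f.coeff m ≠ 0 := by rintro h; simp [h] at hm
  exact ⟨m, hfm, (natTrailingDegree_le_of_ne_zero hm).antisymm
    (natTrailingDegree_commPolynomial_le hfm)⟩

end MvPolynomial

open MvPolynomial

theorem omega0_eq_natTrailingDegree_commPolynomial {σ : Type*} (f : MvPolynomial σ ℚ[X]) :
    omega0 f = (commPolynomial f).natTrailingDegree := by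
  rcases eq_or_ne f 0 with rfl | hf
  · simp [omega0]
  have hval : ∀ m, (f.coeff m).rootMultiplicity 0 = (f.coeff m).natTrailingDegree :=
    fun _ => rootMultiplicity_eq_natTrailingDegree'
  refine IsLeast.csInf_eq ⟨?_, ?_⟩
  · obtain ⟨m, hm, hdeg⟩ := exists_natTrailingDegree_coeff_eq hf
    exact ⟨m, mem_support_iff.mpr hm, (hval m).trans hdeg⟩
  · rintro _ ⟨m, hm, rfl⟩
    exact (natTrailingDegree_commPolynomial_le (mem_support_iff.mp hm)).trans (hval m).ge

theorem coeff_initForm {σ : Type*} (f : MvPolynomial σ ℚ[X]) (m : σ →₀ ℕ) :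
    (initForm f).coeff m = (f.coeff m).coeff (omega0 f) := by
  classical
  simp only [initForm, MvPolynomial.coeff_sum, MvPolynomial.coeff_monomial, Finset.sum_ite_eq',
    MvPolynomial.mem_support_iff]
  split_ifs with hm
  · rfl
  · simp [not_not.mp hm]

theorem initForm_eq_trailingCoeff_commPolynomial {σ : Type*} (f : MvPolynomial σ ℚ[X]) :
    initForm f = (commPolynomial f).trailingCoeff := by
  ext m
  rw [coeff_initForm, trailingCoeff, ← omega0_eq_natTrailingDegree_commPolynomial,
    coeff_coeff_commPolynomial]

theorem initForm_mul {σ : Type*} (f g : MvPolynomial σ ℚ[X]) (hf : f ≠ 0) (hg : g ≠ 0) :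
    f * g ≠ 0 ∧ omega0 (f * g) = omega0 f + omega0 g ∧
      initForm (f * g) = initForm f * initForm g := by
  refine ⟨mul_ne_zero hf hg, ?_, ?_⟩
  · simp only [omega0_eq_natTrailingDegree_commPolynomial, map_mul,
      natTrailingDegree_mul (commPolynomial_ne_zero hf) (commPolynomial_ne_zero hg)]
  · simp only [initForm_eq_trailingCoeff_commPolynomial, map_mul, trailingCoeff_mul]
end

section
/- Let k be a field of characteristic zero, n a natural number, and G a k-linear subspace of k^n (i.e. G : Submodule k (Fin n → k)). For a polynomial f ∈ MvPolynomial (Fin n) k, the following are equivalent: (i) for every λ ∈ G, substituting X_i ↦ X_i + λ_i into f returns f (i.e. the algebra map sending X_i to X_i + C(λ_i) fixes f); (ii) f lies in the k-subalgebra of MvPolynomial (Fin n) k generated by the linear forms ∑_{i} a_i X_i, where a ranges over all vectors a ∈ k^n satisfying ∑_i a_i λ_i = 0 for every λ ∈ G. -/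
open MvPolynomial

/-!
Choose a linear map `P : kⁿ → kⁿ` that kills `G` and moves every point only by an element
of `G` (a section of `kⁿ → kⁿ ⧸ G` composed with the quotient map). An invariant `f` then
satisfies `f (P x) = f x` for every `x`, and since `k` is infinite this identity of functions is
an identity of polynomials, `f = f (P X)`. The coordinates of `P X` are linear forms whose
coefficient vectors, the rows of `P`, annihilate `G`.
-/

namespace MvPolynomial

variable {σ R : Type*}

section CommSemiring

variable [CommSemiring R]

theorem eval_aeval (x : σ → R) (φ : σ → MvPolynomial σ R) (f : MvPolynomial σ R) :
    eval x (aeval φ f) = eval (fun i => eval x (φ i)) f := by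
  change aeval x (aeval φ f) = aeval (fun i => aeval x (φ i)) f
  rw [← AlgHom.comp_apply, comp_aeval]

theorem eval_aeval_X_add_C (x l : σ → R) (f : MvPolynomial σ R) :
    eval x (aeval (fun i => X i + C (l i)) f) = eval (x + l) f := by
  simp only [eval_aeval, eval_add, eval_X, eval_C, Pi.add_def]

theorem aeval_mem_adjoin_range {S : Type*} [CommSemiring S] [Algebra R S] (φ : σ → S)
    (f : MvPolynomial σ R) : aeval φ f ∈ Algebra.adjoin R (Set.range φ) := by
  rw [Algebra.adjoin_range_eq_range_aeval]
  exact AlgHom.mem_range_self _ f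

variable [Fintype σ]

noncomputable def linearForm (a : σ → R) : MvPolynomial σ R := ∑ i, C (a i) * X i

theorem eval_linearForm (x a : σ → R) : eval x (linearForm a) = a ⬝ᵥ x := by
  simp [linearForm, dotProduct]

theorem aeval_X_add_C_linearForm (l a : σ → R) :
    aeval (fun i => X i + C (l i)) (linearForm a) = linearForm a + C (a ⬝ᵥ l) := by
  simp [linearForm, mul_add, Finset.sum_add_distrib, dotProduct]

end CommSemiring

theorem aeval_linearForm_toMatrix'_eq_self [CommRing R] [IsDomain R] [Infinite R] [Fintype σ]
    [DecidableEq σ] (P : (σ → R) →ₗ[R] σ → R) {f : MvPolynomial σ R}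
    (hf : ∀ x, eval (P x) f = eval x f) :
    aeval (fun i => linearForm (LinearMap.toMatrix' P i)) f = f :=
  funext fun x => by
    simp only [eval_aeval, eval_linearForm]
    exact (congrArg (eval · f) (LinearMap.toMatrix'_mulVec P x)).trans (hf x)

end MvPolynomial

theorem Submodule.exists_le_ker_and_sub_mem {K V : Type*} [DivisionRing K] [AddCommGroup V]
    [Module K V] (G : Submodule K V) :
    ∃ P : V →ₗ[K] V, G ≤ LinearMap.ker P ∧ ∀ x, P x - x ∈ G := by
  obtain ⟨s, hs⟩ := G.mkQ.exists_rightInverse_of_surjective G.range_mkQ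
  refine ⟨s ∘ₗ G.mkQ, fun l hl => ?_, fun x => ?_⟩
  · simp [(Quotient.mk_eq_zero G).mpr hl]
  · rw [← Quotient.mk_eq_zero, Quotient.mk_sub, sub_eq_zero]
    exact LinearMap.congr_fun hs (G.mkQ x)

/-- Nagata's translation action: a polynomial is invariant under translation by all
elements of a subspace `G ⊆ k^n` iff it lies in the subalgebra generated by the linear
forms whose coefficient vectors annihilate `G`. -/
theorem nagata_invariants (k : Type*) [Field k] [CharZero k] (n : ℕ)
    (G : Submodule k (Fin n → k)) (f : MvPolynomial (Fin n) k) :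
    (∀ l ∈ G, MvPolynomial.aeval (fun i => (X i : MvPolynomial (Fin n) k) + C (l i)) f = f) ↔
    f ∈ Algebra.adjoin k {g : MvPolynomial (Fin n) k |
      ∃ a : Fin n → k, (∀ l ∈ G, ∑ i, a i * l i = 0) ∧
        g = ∑ i, C (a i) * X i} := by
  constructor
  · intro hf
    obtain ⟨P, hGP, hPG⟩ := G.exists_le_ker_and_sub_mem
    have hPf : ∀ x, eval (P x) f = eval x f := fun x => by
      rw [← add_sub_cancel x (P x), ← eval_aeval_X_add_C, hf _ (hPG x)]
    rw [← aeval_linearForm_toMatrix'_eq_self P hPf]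
    refine Algebra.adjoin_mono ?_ (aeval_mem_adjoin_range _ f)
    rintro _ ⟨i, rfl⟩
    exact ⟨_, fun l hl => (congrFun (P.toMatrix'_mulVec l) i).trans
      (congrFun (LinearMap.mem_ker.mp (hGP hl)) i), rfl⟩
  · intro hf l hl
    refine Algebra.adjoin_le (S := AlgHom.equalizer (aeval _) (AlgHom.id k _)) ?_ hf
    rintro _ ⟨a, ha, rfl⟩
    change aeval _ (linearForm a) = linearForm a
    rw [aeval_X_add_C_linearForm, dotProduct, ha l hl, C_0, add_zero]
end

section
/- Let m be a natural number and S a finitely generated additive submonoid of Fin m → ℤ. Suppose the monoid algebra AddMonoidAlgebra ℚ S (functions S → ℚ with finite support, with convolution product) is an integral domain that is integrally closed in its field of fractions. Then S is saturated in the subgroup it generates: for every x in the additive subgroup of (Fin m → ℤ) generated by S and every natural number n > 0, if n • x ∈ S then x ∈ S. -/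
/-!
Write `x = s - t` with `s, t ∈ S` and `n • x = w ∈ S`. In `R[S]` the monomials satisfy
`Xᵗⁿ · Xʷ = Xˢⁿ`, so `(Xᵗ)ⁿ ∣ (Xˢ)ⁿ`; in an integrally closed domain this forces `Xᵗ ∣ Xˢ`,
and a monomial `Xᵗ` divides `Xˢ` in `R[S]` only if `s = t + d` for some `d ∈ S`, i.e. `x = d ∈ S`.
-/

theorem AddSubgroup.exists_sub_of_mem_closure_addSubmonoid {G : Type*} [AddCommGroup G]
    (S : AddSubmonoid G) {x : G} (hx : x ∈ AddSubgroup.closure (S : Set G)) :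
    ∃ s ∈ S, ∃ t ∈ S, x = s - t := by
  induction hx using AddSubgroup.closure_induction with
  | mem a ha => exact ⟨a, ha, 0, S.zero_mem, (sub_zero a).symm⟩
  | zero => exact ⟨0, S.zero_mem, 0, S.zero_mem, (sub_zero 0).symm⟩
  | add a b _ _ iha ihb =>
      obtain ⟨s₁, hs₁, t₁, ht₁, rfl⟩ := iha
      obtain ⟨s₂, hs₂, t₂, ht₂, rfl⟩ := ihb
      exact ⟨s₁ + s₂, S.add_mem hs₁ hs₂, t₁ + t₂, S.add_mem ht₁ ht₂, by abel⟩
  | neg a _ iha =>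
      obtain ⟨s, hs, t, ht, rfl⟩ := iha
      exact ⟨t, ht, s, hs, neg_sub s t⟩

namespace AddMonoidAlgebra

theorem exists_add_of_single_dvd_single {R M : Type*} [Semiring R] [Nontrivial R] [AddMonoid M]
    {s t : M} (h : single t (1 : R) ∣ single s 1) : ∃ d, s = t + d := by
  obtain ⟨f, hf⟩ := h
  by_contra! hne
  have hcoeff := coeff_single_mul_of_forall_add_ne (1 : R) f fun d => (hne d).symm
  rw [← hf, coeff_single, Finsupp.single_eq_same] at hcoeff
  exact one_ne_zero hcoeff

end AddMonoidAlgebra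

theorem AddSubmonoid.mem_of_nsmul_mem_of_isIntegrallyClosed {R G : Type*} [CommRing R]
    [AddCommGroup G] (S : AddSubmonoid G) [IsDomain (AddMonoidAlgebra R S)]
    [IsIntegrallyClosed (AddMonoidAlgebra R S)] {x : G}
    (hx : x ∈ AddSubgroup.closure (S : Set G)) {n : ℕ} (hn : n ≠ 0) (hnx : n • x ∈ S) :
    x ∈ S := by
  obtain ⟨s, hs, t, ht, rfl⟩ := AddSubgroup.exists_sub_of_mem_closure_addSubmonoid S hx
  have hpow : (AddMonoidAlgebra.single (⟨t, ht⟩ : S) (1 : R)) ^ n ∣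
      (AddMonoidAlgebra.single (⟨s, hs⟩ : S) 1) ^ n := by
    refine ⟨AddMonoidAlgebra.single ⟨_, hnx⟩ 1, ?_⟩
    simp only [AddMonoidAlgebra.single_pow, one_pow, AddMonoidAlgebra.single_mul_single, mul_one]
    congr 1
    ext
    simp only [AddSubmonoidClass.mk_nsmul, smul_sub, mk_add_mk, add_sub_cancel]
  have : Nontrivial R := (algebraMap R (AddMonoidAlgebra R S)).domain_nontrivial
  obtain ⟨d, hd⟩ := AddMonoidAlgebra.exists_add_of_single_dvd_single
    ((IsIntegrallyClosed.pow_dvd_pow_iff hn).mp hpow)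
  have hsd : s = t + d := congrArg Subtype.val hd
  rw [hsd, add_sub_cancel_left]
  exact d.2

theorem saturated_of_normal_monoid_algebra_general (m : ℕ) (S : AddSubmonoid (Fin m → ℤ))
    (hdom : IsDomain (AddMonoidAlgebra ℚ S))
    (hic : IsIntegrallyClosed (AddMonoidAlgebra ℚ S)) :
    ∀ x ∈ AddSubgroup.closure (S : Set (Fin m → ℤ)),
      ∀ n : ℕ, 0 < n → n • x ∈ S → x ∈ S :=
  fun _ hx _ hn hnx => S.mem_of_nsmul_mem_of_isIntegrallyClosed (R := ℚ) hx hn.ne' hnx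

/-- If the semigroup algebra `ℚ[S]` of a finitely generated affine semigroup `S ⊆ ℤ^m`
is a domain integrally closed in its field of fractions (i.e. normal), then `S` is
saturated in the subgroup of `ℤ^m` it generates. -/
theorem saturated_of_normal_monoid_algebra (m : ℕ) (S : AddSubmonoid (Fin m → ℤ))
    (hFG : S.FG)
    (hdom : IsDomain (AddMonoidAlgebra ℚ S))
    (hic : IsIntegrallyClosed (AddMonoidAlgebra ℚ S)) :
    ∀ x ∈ AddSubgroup.closure (S : Set (Fin m → ℤ)),
      ∀ n : ℕ, 0 < n → n • x ∈ S → x ∈ S :=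
  saturated_of_normal_monoid_algebra_general m S hdom hic
end
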